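/- arXiv:math/0501411 — 2 statements merged into one kernel-verified Lean document; each statement's English description precedes it below -/
import Mathlib

section
/- Let W = {w ∈ W_G : w(Φ_G⁺) ⊇ Φ_K⁺}. Then min over w ∈ W of ‖w·δ_G − δ_K‖² equals min over w ∈ W_G of ‖w·δ_G − δ_K‖²; equivalently, max over w ∈ W of ⟨w·δ_G, δ_K⟩ equals max over w ∈ W_G of ⟨w·δ_G, δ_K⟩. -/
/-! Choose `w₀ ∈ W_G` maximizing `⟪w δ_G, δ_K⟫`; it exists because `W_G` permutes `Φ`, so the
orbit of `δ_G` is finite. If some `α ∈ Φ_K⁺` had `w₀⁻¹ α` negative, then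
`⟪w₀ δ_G, α⟫ < 0 < ⟪δ_K, α⟫`, and reflecting `w₀ δ_G` in `α` would increase the pairing. So
`w₀ ∈ W`, and as `‖w δ_G − δ_K‖² = ‖δ_G‖² + ‖δ_K‖² − 2⟪w δ_G, δ_K⟫`, it realizes all four
extrema. -/

open scoped RealInnerProductSpace

/-- The reflection in the hyperplane orthogonal to `α`. -/
noncomputable def rootReflection {V : Type*} [NormedAddCommGroup V] [InnerProductSpace ℝ V]
    [FiniteDimensional ℝ V] (α : V) : V ≃ₗᵢ[ℝ] V :=
  Submodule.reflection ((ℝ ∙ α)ᗮ)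

/-- The Weyl group: the group generated by the reflections in the roots. -/
noncomputable def weylGroup {V : Type*} [NormedAddCommGroup V] [InnerProductSpace ℝ V]
    [FiniteDimensional ℝ V] (Φ : Finset V) : Subgroup (V ≃ₗᵢ[ℝ] V) :=
  Subgroup.closure { w | ∃ α ∈ Φ, w = rootReflection α }

namespace Finset

lemma sum_lt_sum_filter_pos {ι M : Type*} [AddCommMonoid M] [LinearOrder M]
    [IsOrderedCancelAddMonoid M] {s t : Finset ι} (g : ι → M) (hst : s ⊆ t)
    (hneg : ∃ i ∈ s, g i < 0) :
    ∑ i ∈ s, g i < ∑ i ∈ t with 0 < g i, g i :=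
  calc ∑ i ∈ s, g i < ∑ i ∈ s, max (g i) 0 :=
        sum_lt_sum (fun _ _ ↦ le_max_left _ _)
          (hneg.imp fun _ ⟨hi, hgi⟩ ↦ ⟨hi, hgi.trans_le (le_max_right _ _)⟩)
    _ ≤ ∑ i ∈ t, max (g i) 0 := sum_le_sum_of_subset_of_nonneg hst fun _ _ _ ↦ le_max_right _ _
    _ = ∑ i ∈ t with 0 < g i, g i := by
        rw [sum_filter]
        refine sum_congr rfl fun i _ ↦ ?_
        split_ifs with h
        exacts [max_eq_left h.le, max_eq_right (not_lt.1 h)]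

end Finset

section RootSystem

variable {V : Type*} [NormedAddCommGroup V] [InnerProductSpace ℝ V]

noncomputable def halfPosSum (f : V →ₗ[ℝ] ℝ) (Ψ : Finset V) : V :=
  (2⁻¹ : ℝ) • ∑ β ∈ Ψ with 0 < f β, β

lemma halfPosSum_mem_span (f : V →ₗ[ℝ] ℝ) (Ψ : Finset V) :
    halfPosSum f Ψ ∈ Submodule.span ℝ (Ψ : Set V) :=
  Submodule.smul_mem _ _ <| Submodule.sum_mem _ fun _ hβ ↦
    Submodule.subset_span (Finset.mem_filter.1 hβ).1

variable [FiniteDimensional ℝ V]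

lemma rootReflection_apply (α x : V) :
    rootReflection α x = x - (2 * ⟪α, x⟫ / ‖α‖ ^ 2) • α := by
  rw [rootReflection, Submodule.reflection_orthogonal_apply, Submodule.reflection_singleton_apply]
  module

lemma rootReflection_self (α : V) : rootReflection α α = -α :=
  Submodule.reflection_orthogonalComplement_singleton_eq_neg α

lemma inner_lt_inner_rootReflection_left {α x y : V} (hx : ⟪x, α⟫ < 0) (hy : 0 < ⟪y, α⟫) :
    ⟪x, y⟫ < ⟪rootReflection α x, y⟫ := by
  have hα : 0 < ‖α‖ ^ 2 := by
    have : α ≠ 0 := by rintro rfl; simp at hx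
    positivity
  have : 2 * ⟪α, x⟫ / ‖α‖ ^ 2 * ⟪α, y⟫ < 0 :=
    mul_neg_of_neg_of_pos (div_neg_of_neg_of_pos (by rw [real_inner_comm]; linarith) hα)
      (by rwa [real_inner_comm])
  rw [rootReflection_apply, inner_sub_left, real_inner_smul_left]
  linarith

lemma mapsTo_of_mem_weylGroup {Φ : Finset V}
    (hrefl : ∀ α ∈ Φ, ∀ β ∈ Φ, rootReflection α β ∈ Φ) {w : V ≃ₗᵢ[ℝ] V}
    (hw : w ∈ weylGroup Φ) : Set.MapsTo w Φ Φ := by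
  induction hw using Subgroup.closure_induction'' with
  | mem _ h => obtain ⟨α, hα, rfl⟩ := h; exact hrefl α hα
  | inv_mem _ h =>
    obtain ⟨α, hα, rfl⟩ := h
    rw [rootReflection, Submodule.reflection_inv]
    exact hrefl α hα
  | one => exact Set.mapsTo_id _
  | mul _ _ _ _ hx hy => rw [LinearIsometryEquiv.coe_mul]; exact hx.comp hy

lemma finite_weylGroup_orbit {Φ : Finset V}
    (hrefl : ∀ α ∈ Φ, ∀ β ∈ Φ, rootReflection α β ∈ Φ) {x : V}
    (hx : x ∈ Submodule.span ℝ (Φ : Set V)) :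
    ((fun w : V ≃ₗᵢ[ℝ] V ↦ w x) '' weylGroup Φ).Finite := by
  obtain ⟨c, rfl⟩ := Submodule.mem_span_finset'.1 hx
  refine (Set.finite_range fun g : Φ → Φ ↦ ∑ β : Φ, c β • (g β : V)).subset ?_
  rintro _ ⟨w, hw, rfl⟩
  exact ⟨fun β ↦ ⟨w β, mapsTo_of_mem_weylGroup hrefl hw β.2⟩, by simp [map_sum]⟩

lemma exists_isMaxOn_inner_weylGroup {Φ : Finset V}
    (hrefl : ∀ α ∈ Φ, ∀ β ∈ Φ, rootReflection α β ∈ Φ) {x : V}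
    (hx : x ∈ Submodule.span ℝ (Φ : Set V)) (y : V) :
    ∃ w₀ ∈ weylGroup Φ, IsMaxOn (fun w : V ≃ₗᵢ[ℝ] V ↦ ⟪w x, y⟫) (weylGroup Φ) w₀ := by
  obtain ⟨_, ⟨w₀, hw₀, rfl⟩, hmax⟩ := Set.exists_max_image _ (⟪·, y⟫)
    (finite_weylGroup_orbit hrefl hx) ⟨x, 1, one_mem _, rfl⟩
  exact ⟨w₀, hw₀, isMaxOn_iff.2 fun w hw ↦ hmax _ ⟨w, hw, rfl⟩⟩

lemma inner_halfPosSum_pos (f : V →ₗ[ℝ] ℝ) {Ψ : Finset V} {α : V} (hα : α ∈ Ψ)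
    (hfα : 0 < f α) (hrefl : ∀ β ∈ Ψ, rootReflection α β ∈ Ψ) :
    0 < ⟪halfPosSum f Ψ, α⟫ := by
  classical
  set δ := halfPosSum f Ψ
  -- `s_α` maps `Ψ⁺` into `Ψ` and `α` to `-α`, so it strictly lowers `f` of the half-sum.
  have hlt : f (rootReflection α δ) < f δ := by
    have := Finset.sum_lt_sum_filter_pos f (s := (Ψ.filter (0 < f ·)).image (rootReflection α))
      (t := Ψ) (Finset.image_subset_iff.2 fun β hβ ↦ hrefl β (Finset.mem_filter.1 hβ).1)
      ⟨-α, Finset.mem_image.2 ⟨α, Finset.mem_filter.2 ⟨hα, hfα⟩, rootReflection_self α⟩,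
        by simpa using hfα⟩
    rw [Finset.sum_image (rootReflection α).injective.injOn] at this
    simp only [δ, halfPosSum, map_smul, map_sum, smul_eq_mul]
    linarith
  have hα0 : 0 < ‖α‖ ^ 2 := by
    have : α ≠ 0 := by rintro rfl; simp at hfα
    positivity
  rw [rootReflection_apply, map_sub, map_smul, smul_eq_mul, sub_lt_self_iff] at hlt
  have hcoeff := (div_pos_iff_of_pos_right hα0).1 ((mul_pos_iff_of_pos_right hfα).1 hlt)
  rw [real_inner_comm]
  linarith

lemma subset_image_of_isMaxOn_inner_halfPosSum {Φ Ψ : Finset V}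
    (hrefl : ∀ α ∈ Φ, ∀ β ∈ Φ, rootReflection α β ∈ Φ) (hΨΦ : Ψ ⊆ Φ)
    (hΨrefl : ∀ α ∈ Ψ, ∀ β ∈ Ψ, rootReflection α β ∈ Ψ) (f : V →ₗ[ℝ] ℝ)
    (hf : ∀ α ∈ Φ, f α ≠ 0) {w₀ : V ≃ₗᵢ[ℝ] V} (hw₀ : w₀ ∈ weylGroup Φ)
    (hmax : IsMaxOn (fun w : V ≃ₗᵢ[ℝ] V ↦ ⟪w (halfPosSum f Φ), halfPosSum f Ψ⟫)
      (weylGroup Φ) w₀) :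
    (↑(Ψ.filter (0 < f ·)) : Set V) ⊆ w₀ '' ↑(Φ.filter (0 < f ·)) := by
  intro α hα
  obtain ⟨hαΨ, hfα⟩ := Finset.mem_filter.1 hα
  by_contra hnot
  set β := w₀⁻¹ α
  have hβ : β ∈ Φ := mapsTo_of_mem_weylGroup hrefl (inv_mem hw₀) (hΨΦ hαΨ)
  have hfβ : f β < 0 := (hf β hβ).lt_of_le <| not_lt.1 fun hpos ↦
    hnot ⟨β, Finset.mem_filter.2 ⟨hβ, hpos⟩, w₀.apply_symm_apply α⟩
  have hG : ⟪w₀ (halfPosSum f Φ), α⟫ < 0 := by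
    have hnegβ : -β ∈ Φ := rootReflection_self β ▸ hrefl β hβ β hβ
    have := inner_halfPosSum_pos f hnegβ (by simpa using hfβ) (hrefl _ hnegβ)
    rw [inner_neg_right, neg_pos] at this
    rwa [← w₀.apply_symm_apply α, w₀.inner_map_map]
  have hK : 0 < ⟪halfPosSum f Ψ, α⟫ := inner_halfPosSum_pos f hαΨ hfα (hΨrefl α hαΨ)
  have hsα : rootReflection α ∈ weylGroup Φ := Subgroup.subset_closure ⟨α, hΨΦ hαΨ, rfl⟩
  exact (isMaxOn_iff.1 hmax _ (mul_mem hsα hw₀)).not_gt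
    (inner_lt_inner_rootReflection_left hG hK)

end RootSystem

theorem stmt0_general {V : Type*} [NormedAddCommGroup V] [InnerProductSpace ℝ V] [FiniteDimensional ℝ V]
    (Φ : Finset V)
    (hrefl : ∀ α ∈ Φ, ∀ β ∈ Φ, rootReflection α β ∈ Φ)
    (ΦGp : Finset V)
    (hΦGp : ∃ f : V →ₗ[ℝ] ℝ, (∀ α ∈ Φ, f α ≠ 0) ∧ ∀ α, α ∈ ΦGp ↔ α ∈ Φ ∧ 0 < f α)
    (δG : V) (hδG : δG = (2⁻¹ : ℝ) • ∑ α ∈ ΦGp, α)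
    (ΦK : Finset V) (hΦKsub : ΦK ⊆ Φ)
    (hΦKrefl : ∀ α ∈ ΦK, ∀ β ∈ ΦK, rootReflection α β ∈ ΦK)
    (ΦKp : Finset V) (hΦKp : ∀ α, α ∈ ΦKp ↔ α ∈ ΦK ∧ α ∈ ΦGp)
    (δK : V) (hδK : δK = (2⁻¹ : ℝ) • ∑ α ∈ ΦKp, α) :
    (∃ m : ℝ,
      IsLeast {r : ℝ | ∃ w ∈ weylGroup Φ,
        (↑ΦKp : Set V) ⊆ ⇑w '' (↑ΦGp : Set V) ∧ r = ‖w δG - δK‖ ^ 2} m ∧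
      IsLeast {r : ℝ | ∃ w ∈ weylGroup Φ, r = ‖w δG - δK‖ ^ 2} m) ∧
    (∃ M : ℝ,
      IsGreatest {r : ℝ | ∃ w ∈ weylGroup Φ,
        (↑ΦKp : Set V) ⊆ ⇑w '' (↑ΦGp : Set V) ∧ r = ⟪w δG, δK⟫} M ∧
      IsGreatest {r : ℝ | ∃ w ∈ weylGroup Φ, r = ⟪w δG, δK⟫} M) := by
  obtain ⟨f, hf, hGp⟩ := hΦGp
  obtain rfl : ΦGp = Φ.filter (0 < f ·) := by ext; simp [hGp]
  obtain rfl : ΦKp = ΦK.filter (0 < f ·) := by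
    ext α
    simp only [hΦKp, Finset.mem_filter]
    exact ⟨fun ⟨hK, _, hpos⟩ ↦ ⟨hK, hpos⟩, fun ⟨hK, hpos⟩ ↦ ⟨hK, hΦKsub hK, hpos⟩⟩
  obtain rfl : δG = halfPosSum f Φ := hδG
  obtain rfl : δK = halfPosSum f ΦK := hδK
  obtain ⟨w₀, hw₀, hmax⟩ := exists_isMaxOn_inner_weylGroup hrefl (halfPosSum_mem_span f Φ)
    (halfPosSum f ΦK)
  have hW := subset_image_of_isMaxOn_inner_halfPosSum hrefl hΦKsub hΦKrefl f hf hw₀ hmax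
  rw [isMaxOn_iff] at hmax
  have hnorm (w : V ≃ₗᵢ[ℝ] V) : ‖w (halfPosSum f Φ) - halfPosSum f ΦK‖ ^ 2 =
      ‖halfPosSum f Φ‖ ^ 2 + ‖halfPosSum f ΦK‖ ^ 2
        - 2 * ⟪w (halfPosSum f Φ), halfPosSum f ΦK⟫ := by
    rw [norm_sub_sq_real, w.norm_map]; ring
  refine ⟨⟨_, ⟨⟨w₀, hw₀, hW, (hnorm w₀).symm⟩, ?_⟩, ⟨w₀, hw₀, (hnorm w₀).symm⟩, ?_⟩,
    ⟨_, ⟨⟨w₀, hw₀, hW, rfl⟩, ?_⟩, ⟨w₀, hw₀, rfl⟩, ?_⟩⟩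
  · rintro _ ⟨w, hw, -, rfl⟩; linarith [hnorm w, hmax w hw]
  · rintro _ ⟨w, hw, rfl⟩; linarith [hnorm w, hmax w hw]
  · rintro _ ⟨w, hw, -, rfl⟩; exact hmax w hw
  · rintro _ ⟨w, hw, rfl⟩; exact hmax w hw

/-- The minimum of `‖w·δ_G − δ_K‖²` over `W = {w ∈ W_G : w(Φ_G⁺) ⊇ Φ_K⁺}` equals its minimum
over all of `W_G`; equivalently, the maximum of `⟨w·δ_G, δ_K⟩` over `W` equals its maximum
over `W_G`. -/
theorem stmt0 {V : Type*} [NormedAddCommGroup V] [InnerProductSpace ℝ V] [FiniteDimensional ℝ V]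
    (Φ : Finset V) (hΦ0 : (0 : V) ∉ Φ)
    (hspan : Submodule.span ℝ (Φ : Set V) = ⊤)
    (hred : ∀ α ∈ Φ, ∀ t : ℝ, t • α ∈ Φ → t = 1 ∨ t = -1)
    (hrefl : ∀ α ∈ Φ, ∀ β ∈ Φ, rootReflection α β ∈ Φ)
    (ΦGp : Finset V)
    (hΦGp : ∃ f : V →ₗ[ℝ] ℝ, (∀ α ∈ Φ, f α ≠ 0) ∧ ∀ α, α ∈ ΦGp ↔ α ∈ Φ ∧ 0 < f α)
    (δG : V) (hδG : δG = (2⁻¹ : ℝ) • ∑ α ∈ ΦGp, α)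
    (ΦK : Finset V) (hΦKsub : ΦK ⊆ Φ)
    (hΦKneg : ∀ α ∈ ΦK, -α ∈ ΦK)
    (hΦKrefl : ∀ α ∈ ΦK, ∀ β ∈ ΦK, rootReflection α β ∈ ΦK)
    (ΦKp : Finset V) (hΦKp : ∀ α, α ∈ ΦKp ↔ α ∈ ΦK ∧ α ∈ ΦGp)
    (δK : V) (hδK : δK = (2⁻¹ : ℝ) • ∑ α ∈ ΦKp, α) :
    (∃ m : ℝ,
      IsLeast {r : ℝ | ∃ w ∈ weylGroup Φ,
        (↑ΦKp : Set V) ⊆ ⇑w '' (↑ΦGp : Set V) ∧ r = ‖w δG - δK‖ ^ 2} m ∧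
      IsLeast {r : ℝ | ∃ w ∈ weylGroup Φ, r = ‖w δG - δK‖ ^ 2} m) ∧
    (∃ M : ℝ,
      IsGreatest {r : ℝ | ∃ w ∈ weylGroup Φ,
        (↑ΦKp : Set V) ⊆ ⇑w '' (↑ΦGp : Set V) ∧ r = ⟪w δG, δK⟫} M ∧
      IsGreatest {r : ℝ | ∃ w ∈ weylGroup Φ, r = ⟪w δG, δK⟫} M) :=
  stmt0_general Φ hrefl ΦGp hΦGp δG hδG ΦK hΦKsub hΦKrefl ΦKp hΦKp δK hδK
end

section
/- One has B(δ_G − δ_K, δ_G − δ_K) = 128; the set Λ = {v ∈ Φ⁺ : B(v, δ_K) < 0} has exactly 13 elements and Σ_{v∈Λ} B(v, δ_K) = −41. Consequently, for the rescaled inner product ⟨·,·⟩ = (1/36)B, one has 2⟨δ_G − δ_K, δ_G − δ_K⟩ + 4 Σ_{v∈Λ} ⟨v, δ_K⟩ + 64/8 = 95/9. -/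
/-!
Positive roots are the nonnegative integer vectors `v` with `B(v, v) = 2`. Pairing with the
fundamental weights `ω_j` (so that `B(v, ω_j) = v_j`), Cauchy–Schwarz for the positive definite
form `B` gives `v_j ^ 2 ≤ 2 B(ω_j, ω_j)`, which bounds every positive root by the highest root
`(2, 2, 3, 4, 3, 2, 1)`; a finite search then lists the 63 positive roots. All remaining
quantities are coordinate sums over explicit subsets of this list, computed over `ℕ`, combined
with the linearity of `B` in its first argument.
-/

/-- The Cartan matrix of `E7` in Bourbaki labeling. -/
def CartanE7 : Matrix (Fin 7) (Fin 7) ℚ :=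
  !![2, 0, -1, 0, 0, 0, 0; 0, 2, 0, -1, 0, 0, 0; -1, 0, 2, -1, 0, 0, 0;
    0, -1, -1, 2, -1, 0, 0; 0, 0, 0, -1, 2, -1, 0; 0, 0, 0, 0, -1, 2, -1;
    0, 0, 0, 0, 0, -1, 2]

/-- The bilinear form `B` determined by the Cartan matrix of `E7` in the simple root
basis (all simple roots long, `B(alpha_i, alpha_i) = 2`). -/
def BE7 (v w : Fin 7 → ℚ) : ℚ := ∑ i, ∑ j, v i * CartanE7 i j * w j

/-- A root of `E7`: an integer vector `v` in the simple root basis with `B(v,v) = 2`. -/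
def IsRootE7 (v : Fin 7 → ℚ) : Prop := (∀ i, ∃ n : ℤ, v i = n) ∧ BE7 v v = 2

open Finset

lemma BE7_eq_toBilin' (v w : Fin 7 → ℚ) : BE7 v w = CartanE7.toBilin' v w :=
  (Matrix.toBilin'_apply _ _ _).symm

lemma BE7_apply (v w : Fin 7 → ℚ) : BE7 v w =
    2 * (v 0 * w 0 + v 1 * w 1 + v 2 * w 2 + v 3 * w 3 + v 4 * w 4 + v 5 * w 5 + v 6 * w 6)
    - (v 0 * w 2 + v 2 * w 0) - (v 1 * w 3 + v 3 * w 1) - (v 2 * w 3 + v 3 * w 2)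
    - (v 3 * w 4 + v 4 * w 3) - (v 4 * w 5 + v 5 * w 4) - (v 5 * w 6 + v 6 * w 5) := by
  simp only [BE7, CartanE7, Matrix.of_apply, Matrix.cons_val', Matrix.cons_val_fin_one,
    Fin.sum_univ_succ, Fin.isValue, Matrix.cons_val_zero, Matrix.cons_val_succ, Fin.succ_zero_eq_one,
    Fin.succ_one_eq_two, Fin.reduceSucc, univ_unique, Fin.default_eq_zero, sum_singleton]
  ring

lemma BE7_sum_left {ι : Type*} (s : Finset ι) (f : ι → Fin 7 → ℚ) (w : Fin 7 → ℚ) :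
    BE7 (∑ i ∈ s, f i) w = ∑ i ∈ s, BE7 (f i) w := by
  simp only [BE7_eq_toBilin', map_sum, LinearMap.sum_apply]

lemma BE7_self_eq_sum_sq (v : Fin 7 → ℚ) : BE7 v v =
    2 * (v 0 - v 2 / 2) ^ 2 + 2 * (v 1 - v 3 / 2) ^ 2 + 3 / 2 * (v 2 - 2 * v 3 / 3) ^ 2
    + 5 / 6 * (v 3 - 6 * v 4 / 5) ^ 2 + 4 / 5 * (v 4 - 5 * v 5 / 4) ^ 2
    + 3 / 4 * (v 5 - 4 * v 6 / 3) ^ 2 + 2 / 3 * v 6 ^ 2 := by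
  rw [BE7_apply]
  ring

lemma BE7_sq_le (v w : Fin 7 → ℚ) : BE7 v w ^ 2 ≤ BE7 v v * BE7 w w := by
  simp only [BE7_eq_toBilin']
  refine LinearMap.BilinForm.apply_sq_le_of_symm _ (fun x => ?_) ?_ v w
  · rw [← BE7_eq_toBilin', BE7_self_eq_sum_sq]
    positivity
  · exact LinearMap.BilinForm.isSymm_iff.1 (Matrix.isSymm_toBilin'_iff_isSymm.2 (by decide))

/-- The rows of `CartanE7⁻¹`. -/
def fundamentalWeightE7 : Fin 7 → Fin 7 → ℚ :=
  ![![2, 2, 3, 4, 3, 2, 1], ![2, 7/2, 4, 6, 9/2, 3, 3/2], ![3, 4, 6, 8, 6, 4, 2],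
    ![4, 6, 8, 12, 9, 6, 3], ![3, 9/2, 6, 9, 15/2, 5, 5/2], ![2, 3, 4, 6, 5, 4, 2],
    ![1, 3/2, 2, 3, 5/2, 2, 3/2]]

lemma BE7_fundamentalWeightE7 (v : Fin 7 → ℚ) (j : Fin 7) :
    BE7 v (fundamentalWeightE7 j) = v j := by
  fin_cases j <;>
    simp only [fundamentalWeightE7, BE7_apply, Fin.reduceFinMk, Fin.zero_eta, Fin.mk_one, Fin.isValue,
      Matrix.cons_val, Matrix.cons_val_zero, Matrix.cons_val_one] <;>
    ring

lemma sq_le_BE7_mul_fundamentalWeightE7 (v : Fin 7 → ℚ) (j : Fin 7) :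
    v j ^ 2 ≤ BE7 v v * fundamentalWeightE7 j j := by
  simpa only [BE7_fundamentalWeightE7] using BE7_sq_le v (fundamentalWeightE7 j)

def highestRootE7 : Fin 7 → ℕ := ![2, 2, 3, 4, 3, 2, 1]

lemma le_highestRootE7 (n : Fin 7 → ℕ) (hn : BE7 (Nat.cast ∘ n) (Nat.cast ∘ n) = 2) (j : Fin 7) :
    n j ≤ highestRootE7 j := by
  have hsq := sq_le_BE7_mul_fundamentalWeightE7 (Nat.cast ∘ n) j
  have hbound : 2 * fundamentalWeightE7 j j < ((highestRootE7 j : ℚ) + 1) ^ 2 := by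
    fin_cases j <;> norm_num [fundamentalWeightE7, highestRootE7]
  rw [hn] at hsq
  have : (n j : ℚ) < highestRootE7 j + 1 :=
    lt_of_pow_lt_pow_left₀ 2 (by positivity) (hsq.trans_lt hbound)
  exact Nat.lt_succ_iff.1 (by exact_mod_cast this)

def positiveRootsE7 : Finset (Fin 7 → ℕ) :=
  {![0, 0, 0, 0, 0, 0, 1], ![0, 0, 0, 0, 0, 1, 0], ![0, 0, 0, 0, 0, 1, 1],
   ![0, 0, 0, 0, 1, 0, 0], ![0, 0, 0, 0, 1, 1, 0], ![0, 0, 0, 0, 1, 1, 1],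
   ![0, 0, 0, 1, 0, 0, 0], ![0, 0, 0, 1, 1, 0, 0], ![0, 0, 0, 1, 1, 1, 0],
   ![0, 0, 0, 1, 1, 1, 1], ![0, 0, 1, 0, 0, 0, 0], ![0, 0, 1, 1, 0, 0, 0],
   ![0, 0, 1, 1, 1, 0, 0], ![0, 0, 1, 1, 1, 1, 0], ![0, 0, 1, 1, 1, 1, 1],
   ![0, 1, 0, 0, 0, 0, 0], ![0, 1, 0, 1, 0, 0, 0], ![0, 1, 0, 1, 1, 0, 0],
   ![0, 1, 0, 1, 1, 1, 0], ![0, 1, 0, 1, 1, 1, 1], ![0, 1, 1, 1, 0, 0, 0],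
   ![0, 1, 1, 1, 1, 0, 0], ![0, 1, 1, 1, 1, 1, 0], ![0, 1, 1, 1, 1, 1, 1],
   ![0, 1, 1, 2, 1, 0, 0], ![0, 1, 1, 2, 1, 1, 0], ![0, 1, 1, 2, 1, 1, 1],
   ![0, 1, 1, 2, 2, 1, 0], ![0, 1, 1, 2, 2, 1, 1], ![0, 1, 1, 2, 2, 2, 1],
   ![1, 0, 0, 0, 0, 0, 0], ![1, 0, 1, 0, 0, 0, 0], ![1, 0, 1, 1, 0, 0, 0],
   ![1, 0, 1, 1, 1, 0, 0], ![1, 0, 1, 1, 1, 1, 0], ![1, 0, 1, 1, 1, 1, 1],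
   ![1, 1, 1, 1, 0, 0, 0], ![1, 1, 1, 1, 1, 0, 0], ![1, 1, 1, 1, 1, 1, 0],
   ![1, 1, 1, 1, 1, 1, 1], ![1, 1, 1, 2, 1, 0, 0], ![1, 1, 1, 2, 1, 1, 0],
   ![1, 1, 1, 2, 1, 1, 1], ![1, 1, 1, 2, 2, 1, 0], ![1, 1, 1, 2, 2, 1, 1],
   ![1, 1, 1, 2, 2, 2, 1], ![1, 1, 2, 2, 1, 0, 0], ![1, 1, 2, 2, 1, 1, 0],
   ![1, 1, 2, 2, 1, 1, 1], ![1, 1, 2, 2, 2, 1, 0], ![1, 1, 2, 2, 2, 1, 1],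
   ![1, 1, 2, 2, 2, 2, 1], ![1, 1, 2, 3, 2, 1, 0], ![1, 1, 2, 3, 2, 1, 1],
   ![1, 1, 2, 3, 2, 2, 1], ![1, 1, 2, 3, 3, 2, 1], ![1, 2, 2, 3, 2, 1, 0],
   ![1, 2, 2, 3, 2, 1, 1], ![1, 2, 2, 3, 2, 2, 1], ![1, 2, 2, 3, 3, 2, 1],
   ![1, 2, 2, 4, 3, 2, 1], ![1, 2, 3, 4, 3, 2, 1], ![2, 2, 3, 4, 3, 2, 1]}

lemma BE7_natCast_self (n : Fin 7 → ℕ) : BE7 (Nat.cast ∘ n) (Nat.cast ∘ n) =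
    2 * (((n 0 * n 0 + n 1 * n 1 + n 2 * n 2 + n 3 * n 3 + n 4 * n 4 + n 5 * n 5 + n 6 * n 6 : ℕ) : ℚ)
      - ((n 0 * n 2 + n 1 * n 3 + n 2 * n 3 + n 3 * n 4 + n 4 * n 5 + n 5 * n 6 : ℕ) : ℚ)) := by
  rw [BE7_apply]
  push_cast
  simp only [Function.comp_apply]
  ring

lemma BE7_natCast_self_eq_two_iff (n : Fin 7 → ℕ) :
    BE7 (Nat.cast ∘ n) (Nat.cast ∘ n) = 2 ↔
      n 0 * n 0 + n 1 * n 1 + n 2 * n 2 + n 3 * n 3 + n 4 * n 4 + n 5 * n 5 + n 6 * n 6 =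
        1 + (n 0 * n 2 + n 1 * n 3 + n 2 * n 3 + n 3 * n 4 + n 4 * n 5 + n 5 * n 6) := by
  rw [BE7_natCast_self]
  constructor
  · intro h
    exact_mod_cast (by linarith : ((_ : ℕ) : ℚ) = 1 + ((_ : ℕ) : ℚ))
  · intro h
    rw [h]
    push_cast
    ring

set_option maxRecDepth 10000 in
lemma positiveRootsE7_spec : ∀ n ∈ positiveRootsE7,
    n 0 * n 0 + n 1 * n 1 + n 2 * n 2 + n 3 * n 3 + n 4 * n 4 + n 5 * n 5 + n 6 * n 6 =
      1 + (n 0 * n 2 + n 1 * n 3 + n 2 * n 3 + n 3 * n 4 + n 4 * n 5 + n 5 * n 6) := by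
  decide

set_option maxRecDepth 10000 in
set_option synthInstance.maxSize 100000 in
lemma mem_positiveRootsE7_of_le : ∀ a ≤ 2, ∀ b ≤ 2, ∀ c ≤ 3, ∀ d ≤ 4, ∀ e ≤ 3, ∀ f ≤ 2, ∀ g ≤ 1,
    a * a + b * b + c * c + d * d + e * e + f * f + g * g =
      1 + (a * c + b * d + c * d + d * e + e * f + f * g) →
    ![a, b, c, d, e, f, g] ∈ positiveRootsE7 := by
  decide

lemma mem_positiveRootsE7_iff (n : Fin 7 → ℕ) :
    n ∈ positiveRootsE7 ↔ BE7 (Nat.cast ∘ n) (Nat.cast ∘ n) = 2 := by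
  refine ⟨fun h => (BE7_natCast_self_eq_two_iff n).2 (positiveRootsE7_spec n h), fun h => ?_⟩
  have hle := le_highestRootE7 n h
  have hn : n = ![n 0, n 1, n 2, n 3, n 4, n 5, n 6] := by
    funext i; fin_cases i <;> rfl
  rw [hn]
  exact mem_positiveRootsE7_of_le _ (hle 0) _ (hle 1) _ (hle 2) _ (hle 3) _ (hle 4) _ (hle 5)
    _ (hle 6) ((BE7_natCast_self_eq_two_iff n).1 h)

lemma exists_natCast_comp_eq {ι : Type*} (v : ι → ℚ) (hint : ∀ i, ∃ m : ℤ, v i = m)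
    (hnonneg : ∀ i, 0 ≤ v i) : ∃ n : ι → ℕ, Nat.cast ∘ n = v := by
  choose m hm using hint
  refine ⟨fun i => (m i).toNat, funext fun i => ?_⟩
  have : 0 ≤ m i := by exact_mod_cast hm i ▸ hnonneg i
  rw [Function.comp_apply, hm]
  exact_mod_cast Int.toNat_of_nonneg this

lemma exists_int_natCast_eq_two_mul_iff (k : ℕ) : (∃ m : ℤ, (k : ℚ) = 2 * m) ↔ Even k := by
  constructor
  · rintro ⟨m, hm⟩
    exact Int.even_coe_nat k |>.1 ⟨m, by rw [← two_mul]; exact_mod_cast hm⟩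
  · rintro ⟨r, rfl⟩
    exact ⟨r, by push_cast; ring⟩

lemma sum_image_natCast_comp {ι R : Type*} [AddCommMonoidWithOne R] [CharZero R]
    [DecidableEq (ι → R)] (s : Finset (ι → ℕ)) :
    ∑ v ∈ s.image (Nat.cast ∘ · : (ι → ℕ) → ι → R), v = Nat.cast ∘ ∑ n ∈ s, n := by
  rw [sum_image fun _ _ _ _ h => Nat.cast_injective.comp_left h]
  funext i
  simp

lemma isRootE7_and_nonneg_iff (v : Fin 7 → ℚ) :
    IsRootE7 v ∧ (∀ i, 0 ≤ v i) ↔ v ∈ positiveRootsE7.image (Nat.cast ∘ ·) := by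
  simp only [mem_image, mem_positiveRootsE7_iff]
  constructor
  · rintro ⟨⟨hint, hv⟩, hnonneg⟩
    obtain ⟨n, rfl⟩ := exists_natCast_comp_eq v hint hnonneg
    exact ⟨n, hv, rfl⟩
  · rintro ⟨n, hn, rfl⟩
    exact ⟨⟨fun i => ⟨n i, rfl⟩, hn⟩, fun i => Nat.cast_nonneg _⟩

set_option maxRecDepth 10000 in
lemma sum_positiveRootsE7 : ∑ n ∈ positiveRootsE7, n = ![34, 49, 66, 96, 75, 52, 27] := by
  decide

set_option maxRecDepth 10000 in
lemma sum_positiveRootsE7_filter_even :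
    ∑ n ∈ positiveRootsE7.filter (fun n => Even (n 0)), n = ![2, 17, 18, 32, 27, 20, 11] := by
  decide

set_option maxRecDepth 10000 in
lemma card_positiveRootsE7_filter_lt :
    (positiveRootsE7.filter fun n => n 1 + n 2 + n 3 + n 4 + n 5 + n 6 < 7 * n 0).card = 13 := by
  decide

set_option maxRecDepth 10000 in
lemma sum_positiveRootsE7_filter_lt :
    ∑ n ∈ positiveRootsE7.filter (fun n => n 1 + n 2 + n 3 + n 4 + n 5 + n 6 < 7 * n 0), n =
      ![13, 7, 13, 14, 9, 5, 2] := by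
  decide

/-- The vector is `δ_K` (`sum_positiveRootsE7_filter_even`): it pairs to `1` with the simple roots
`α₂, …, α₇` of `D₆`. -/
lemma BE7_halfSumCompactRoots (v : Fin 7 → ℚ) :
    BE7 v ((2⁻¹ : ℚ) • (Nat.cast ∘ ![2, 17, 18, 32, 27, 20, 11])) =
      v 1 + v 2 + v 3 + v 4 + v 5 + v 6 - 7 * v 0 := by
  simp only [BE7_apply, Pi.smul_apply, Function.comp_apply, smul_eq_mul, Fin.isValue,
    Matrix.cons_val, Matrix.cons_val_zero, Matrix.cons_val_one]
  ring

lemma filter_image_natCast_comp_even (s : Finset (Fin 7 → ℕ))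
    [DecidablePred fun v : Fin 7 → ℚ => ∃ m : ℤ, v 0 = 2 * m] :
    (s.image (Nat.cast ∘ ·)).filter (fun v : Fin 7 → ℚ => ∃ m : ℤ, v 0 = 2 * m) =
      (s.filter fun n => Even (n 0)).image (Nat.cast ∘ ·) := by
  rw [filter_image]
  exact congrArg _ (filter_congr fun n _ => exists_int_natCast_eq_two_mul_iff (n 0))

lemma filter_image_natCast_comp_BE7_halfSumCompactRoots_neg (s : Finset (Fin 7 → ℕ)) :
    (s.image (Nat.cast ∘ ·)).filter
        (fun v => BE7 v ((2⁻¹ : ℚ) • (Nat.cast ∘ ![2, 17, 18, 32, 27, 20, 11])) < 0) =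
      (s.filter fun n => n 1 + n 2 + n 3 + n 4 + n 5 + n 6 < 7 * n 0).image (Nat.cast ∘ ·) := by
  rw [filter_image]
  refine congrArg _ (filter_congr fun n _ => ?_)
  rw [BE7_halfSumCompactRoots, sub_neg]
  simp only [Function.comp_apply]
  exact_mod_cast Iff.rfl

theorem stmt14
    (Φplus : Finset (Fin 7 → ℚ))
    (hΦplus : ∀ v, v ∈ Φplus ↔ IsRootE7 v ∧ ∀ i, 0 ≤ v i)
    (ΦKplus : Finset (Fin 7 → ℚ))
    (hΦKplus : ∀ v, v ∈ ΦKplus ↔ v ∈ Φplus ∧ ∃ n : ℤ, v 0 = 2 * n)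
    (δG δK : Fin 7 → ℚ)
    (hδG : δG = (2⁻¹ : ℚ) • ∑ v ∈ Φplus, v)
    (hδK : δK = (2⁻¹ : ℚ) • ∑ v ∈ ΦKplus, v)
    (Λ : Finset (Fin 7 → ℚ))
    (hΛ : ∀ v, v ∈ Λ ↔ v ∈ Φplus ∧ BE7 v δK < 0) :
    BE7 (δG - δK) (δG - δK) = 128 ∧
    Λ.card = 13 ∧
    (∑ v ∈ Λ, BE7 v δK) = -41 ∧
    2 * ((1 / 36 : ℚ) * BE7 (δG - δK) (δG - δK)) +
        4 * ((1 / 36 : ℚ) * ∑ v ∈ Λ, BE7 v δK) + 64 / 8 = 95 / 9 := by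
  classical
  have hΦ : Φplus = positiveRootsE7.image (Nat.cast ∘ ·) := by
    ext v; rw [hΦplus, isRootE7_and_nonneg_iff]
  have hΦK : ΦKplus = (positiveRootsE7.filter fun n => Even (n 0)).image (Nat.cast ∘ ·) := by
    rw [← filter_image_natCast_comp_even, ← hΦ]
    ext v; rw [hΦKplus, mem_filter]
  have hδK' : δK = (2⁻¹ : ℚ) • (Nat.cast ∘ ![2, 17, 18, 32, 27, 20, 11]) := by
    rw [hδK, hΦK, sum_image_natCast_comp, sum_positiveRootsE7_filter_even]
  have hΛ' : Λ = (positiveRootsE7.filter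
      fun n => n 1 + n 2 + n 3 + n 4 + n 5 + n 6 < 7 * n 0).image (Nat.cast ∘ ·) := by
    rw [← filter_image_natCast_comp_BE7_halfSumCompactRoots_neg, ← hδK', ← hΦ]
    ext v; rw [hΛ, mem_filter]
  have h128 : BE7 (δG - δK) (δG - δK) = 128 := by
    rw [hδG, hΦ, sum_image_natCast_comp, sum_positiveRootsE7, hδK', BE7_apply]
    simp only [Pi.sub_apply, Pi.smul_apply, Function.comp_apply, smul_eq_mul, Fin.isValue,
      Matrix.cons_val, Matrix.cons_val_zero, Matrix.cons_val_one]
    norm_num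
  have hsum : ∑ v ∈ Λ, BE7 v δK = -41 := by
    rw [← BE7_sum_left, hΛ', sum_image_natCast_comp, sum_positiveRootsE7_filter_lt, hδK',
      BE7_halfSumCompactRoots]
    simp only [Function.comp_apply, Fin.isValue, Matrix.cons_val, Matrix.cons_val_zero,
      Matrix.cons_val_one]
    norm_num
  refine ⟨h128, ?_, hsum, by rw [h128, hsum]; norm_num⟩
  rw [hΛ', card_image_of_injective _ Nat.cast_injective.comp_left, card_positiveRootsE7_filter_lt]
end
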